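/- arXiv:0812.2462 — 4 statements merged into one kernel-verified Lean document; each statement's English description precedes it below -/
import Mathlib

section
/- The attractor of any zipper in a complete metric space is connected (in fact path-connected). -/
open Set

/-- `K` is the attractor (invariant nonempty compact set) of the system `S`. -/
def IsAttractor {X : Type*} [MetricSpace X] {m : ℕ} (S : Fin m → X → X) (K : Set X) : Prop :=
  K.Nonempty ∧ IsCompact K ∧ K = ⋃ i, S i '' K

/-- `S` is a zipper with vertices `z 0, …, z m` and signature `ε ∈ {0,1}^m`:
a system of injective contractions with `S j (z 0) = z (j + ε j)` and
`S j (z m) = z (j + 1 - ε j)` (0-based indexing of the maps). -/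
def IsZipper {X : Type*} [MetricSpace X] {m : ℕ} (S : Fin m → X → X)
    (z : ℕ → X) (ε : Fin m → ℕ) : Prop :=
  (∀ j, ε j ≤ 1) ∧
  (∀ j, Function.Injective (S j)) ∧
  (∀ j, ∃ r : NNReal, ContractingWith r (S j)) ∧
  (∀ j : Fin m, S j (z 0) = z (j.val + ε j)) ∧
  (∀ j : Fin m, S j (z m) = z (j.val + 1 - ε j))

/-- The affine maps `T i` of the zipper `S_{P,ε}` on `[0,1]` associated to a
partition `x` and signature `ε`. -/
def zipT {m : ℕ} (x : ℕ → ℝ) (ε : Fin m → ℕ) (i : Fin m) : ℝ → ℝ :=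
  fun t => x (i.val + ε i) * (1 - t) + x (i.val + 1 - ε i) * t

/-!
The attractor is the image of a curve `φ : [0, 1] → X` from `z 0` to `z m` that is
self-similar: on the `j`-th of the `m` cells `[j/m, (j+1)/m]`, `φ` is `S j ∘ φ` composed with
the affine bijection of the cell onto `[0, 1]` (orientation-reversing when `ε j = 1`). The vertex
conditions make these pieces agree where two cells meet. The curve is the uniform limit of the
iterates of this operation, started from the step function jumping from `z 0` to `z m` at `1`.
The iterates are not continuous, but their oscillation decays like `c ^ n`, so the limit is. Its
image is compact and invariant, hence equals the attractor by uniqueness, and it is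
path-connected as a continuous image of `[0, 1]`.
-/

open Filter Topology

section Attractor

variable {X : Type*} [MetricSpace X] {ι : Type*}

theorem exists_lipschitzWith_lt_one [Finite ι] {f : ι → X → X}
    (hf : ∀ i, ∃ r, ContractingWith r (f i)) :
    ∃ c : NNReal, c < 1 ∧ ∀ i, LipschitzWith c (f i) := by
  have := Fintype.ofFinite ι
  choose r hr using hf
  refine ⟨Finset.univ.sup r, ?_, fun i => (hr i).2.weaken (Finset.le_sup (Finset.mem_univ i))⟩
  exact (Finset.sup_lt_iff zero_lt_one).2 fun i _ => (hr i).1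

theorem subset_of_subset_iUnion_image {S : ι → X → X} {c : NNReal} (hc : c < 1)
    (hS : ∀ i, LipschitzWith c (S i)) {K A : Set X} (hK : Bornology.IsBounded K)
    (hKS : K ⊆ ⋃ i, S i '' K) (hA : IsClosed A) (hAne : A.Nonempty)
    (hAS : ⋃ i, S i '' A ⊆ A) : K ⊆ A := by
  obtain ⟨a, ha⟩ := hAne
  obtain ⟨R, hR⟩ := hK.subset_closedBall a
  have approx : ∀ n : ℕ, ∀ x ∈ K, ∃ w ∈ A, dist x w ≤ c ^ n * R := by
    intro n
    induction n with
    | zero => exact fun x hx => ⟨a, ha, by simpa using hR hx⟩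
    | succ n ih =>
      intro x hx
      obtain ⟨_, ⟨i, rfl⟩, y, hy, rfl⟩ := hKS hx
      obtain ⟨w, hw, hyw⟩ := ih y hy
      refine ⟨S i w, hAS (mem_iUnion.2 ⟨i, mem_image_of_mem _ hw⟩), ?_⟩
      calc dist (S i y) (S i w) ≤ c * dist y w := (hS i).dist_le_mul y w
        _ ≤ c * (c ^ n * R) := by gcongr
        _ = c ^ (n + 1) * R := by ring
  intro x hx
  rw [← hA.closure_eq, Metric.mem_closure_iff]
  intro δ hδ
  have hlim : Tendsto (fun n : ℕ => (c : ℝ) ^ n * R) atTop (𝓝 0) := by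
    simpa using (tendsto_pow_atTop_nhds_zero_of_lt_one c.coe_nonneg hc).mul_const R
  obtain ⟨n, hn⟩ := (hlim.eventually (gt_mem_nhds hδ)).exists
  obtain ⟨w, hw, hxw⟩ := approx n x hx
  exact ⟨w, hw, hxw.trans_lt hn⟩

theorem IsAttractor.unique {m : ℕ} {S : Fin m → X → X}
    (hS : ∀ i, ∃ r, ContractingWith r (S i)) {K A : Set X}
    (hK : IsAttractor S K) (hA : IsAttractor S A) : K = A := by
  obtain ⟨c, hc, hSc⟩ := exists_lipschitzWith_lt_one hS
  exact (subset_of_subset_iUnion_image hc hSc hK.2.1.isBounded hK.2.2.subset hA.2.1.isClosed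
    hA.1 hA.2.2.symm.subset).antisymm
    (subset_of_subset_iUnion_image hc hSc hA.2.1.isBounded hA.2.2.subset hK.2.1.isClosed
      hK.1 hK.2.2.symm.subset)

theorem IsAttractor.neZero {m : ℕ} {S : Fin m → X → X} {K : Set X} (hK : IsAttractor S K) :
    NeZero m := by
  obtain ⟨x, hx⟩ := hK.1
  rw [hK.2.2] at hx
  obtain ⟨i, -⟩ := mem_iUnion.1 hx
  exact NeZero.of_pos i.pos

end Attractor

section Approximation

variable {α X : Type*} [MetricSpace X]

theorem exists_tendstoUniformly_of_dist_le_geometric [CompleteSpace X] {F : ℕ → α → X}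
    {C r : ℝ} (hr₀ : 0 ≤ r) (hr : r < 1)
    (hF : ∀ n x, dist (F n x) (F (n + 1) x) ≤ C * r ^ n) :
    ∃ f, TendstoUniformly F f atTop := by
  choose f hf using fun x =>
    cauchySeq_tendsto_of_complete (cauchySeq_of_le_geometric r C hr (hF · x))
  refine ⟨f, Metric.tendstoUniformly_iff.2 fun η hη => ?_⟩
  have hlim : Tendsto (fun n : ℕ => C * r ^ n / (1 - r)) atTop (𝓝 0) := by
    simpa using ((tendsto_pow_atTop_nhds_zero_of_lt_one hr₀ hr).const_mul C).div_const (1 - r)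
  filter_upwards [hlim.eventually (gt_mem_nhds hη)] with n hn x
  rw [dist_comm]
  exact (dist_le_of_le_geometric_of_tendsto r C hr (hF · x) (hf x) n).trans_lt hn

variable [TopologicalSpace α]

def OscillationLE (f : α → X) (s : Set α) (δ : ℝ) : Prop :=
  ∀ t ∈ s, ∀ᶠ x in 𝓝[s] t, dist (f x) (f t) ≤ δ

theorem continuousOn_of_tendstoUniformlyOn_of_oscillationLE {F : ℕ → α → X} {f : α → X}
    {s : Set α} {δ : ℕ → ℝ} (hF : TendstoUniformlyOn F f atTop s)
    (hosc : ∀ n, OscillationLE (F n) s (δ n)) (hδ : Tendsto δ atTop (𝓝 0)) :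
    ContinuousOn f s := by
  intro t ht
  refine Metric.tendsto_nhds.2 fun η hη => ?_
  obtain ⟨n, hδn, hFn⟩ := ((hδ.eventually (gt_mem_nhds (div_pos hη three_pos))).and
    (Metric.tendstoUniformlyOn_iff.1 hF _ (div_pos hη three_pos))).exists
  filter_upwards [hosc n t ht, self_mem_nhdsWithin] with x hx hxs
  calc dist (f x) (f t) ≤ dist (f x) (F n x) + dist (F n x) (F n t) + dist (F n t) (f t) :=
        dist_triangle4 _ _ _ _
    _ < η / 3 + η / 3 + η / 3 := by
        gcongr
        · exact hFn x hxs
        · exact hx.trans_lt hδn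
        · rw [dist_comm]; exact hFn t ht
    _ = η := by ring

theorem eventually_forall_mem_imp_mem {ι : Type*} [Finite ι] {C : ι → Set α}
    (hC : ∀ i, IsClosed (C i)) (t : α) : ∀ᶠ x in 𝓝 t, ∀ i, x ∈ C i → t ∈ C i := by
  refine eventually_all.2 fun i => ?_
  by_cases ht : t ∈ C i
  · exact Eventually.of_forall fun _ _ => ht
  · exact eventually_of_mem ((hC i).isOpen_compl.mem_nhds ht) fun _ hx hxC => absurd hxC hx

end Approximation

section Cells

variable (m : ℕ)

def cell (j : ℕ) : Set ℝ := (fun t => (m : ℝ) * t) ⁻¹' Icc (j : ℝ) (j + 1)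

theorem isClosed_cell (j : ℕ) : IsClosed (cell m j) :=
  isClosed_Icc.preimage (continuous_const_mul _)

variable {m}

theorem cell_subset_Icc {j : ℕ} (hj : j < m) : cell m j ⊆ Icc 0 1 := by
  rintro t ⟨hjt, htj⟩
  have hm : (0 : ℝ) < m := by exact_mod_cast (Nat.zero_le j).trans_lt hj
  have hjm : (j : ℝ) + 1 ≤ m := by exact_mod_cast hj
  exact ⟨(mul_nonneg_iff_of_pos_left hm).1 ((Nat.cast_nonneg j).trans hjt),
    (mul_le_iff_le_one_right hm).1 (htj.trans hjm)⟩

variable (m) in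
noncomputable def cellIndex [NeZero m] (t : ℝ) : Fin m :=
  ⟨min ⌊m * t⌋₊ (m - 1), by have := NeZero.pos m; omega⟩

theorem mem_cell_cellIndex [NeZero m] {t : ℝ} (ht : t ∈ Icc (0 : ℝ) 1) :
    t ∈ cell m (cellIndex m t) := by
  have hmt : 0 ≤ (m : ℝ) * t := mul_nonneg m.cast_nonneg ht.1
  simp only [cell, cellIndex, mem_preimage, mem_Icc]
  constructor
  · exact (Nat.cast_le.2 (min_le_left _ _)).trans (Nat.floor_le hmt)
  · rcases min_choice ⌊(m : ℝ) * t⌋₊ (m - 1) with h | h <;> rw [h]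
    · exact (Nat.lt_floor_add_one _).le
    · rw [Nat.cast_pred (NeZero.pos m), sub_add_cancel]
      exact mul_le_of_le_one_right m.cast_nonneg ht.2

theorem iUnion_cell [NeZero m] : ⋃ j : Fin m, cell m j = Icc 0 1 :=
  (iUnion_subset fun j => cell_subset_Icc j.2).antisymm fun _ ht =>
    mem_iUnion.2 ⟨_, mem_cell_cellIndex ht⟩

def cellCoord (ε : Fin m → ℕ) (j : Fin m) (t : ℝ) : ℝ :=
  if ε j = 0 then m * t - j else j + 1 - m * t

theorem continuous_cellCoord (ε : Fin m → ℕ) (j : Fin m) : Continuous (cellCoord ε j) := by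
  unfold cellCoord
  split_ifs <;> fun_prop

theorem mapsTo_cellCoord (ε : Fin m → ℕ) (j : Fin m) :
    MapsTo (cellCoord ε j) (cell m j) (Icc 0 1) := by
  rintro t ⟨hjt, htj⟩
  unfold cellCoord
  split_ifs <;> constructor <;> linarith

theorem image_cellCoord_cell (ε : Fin m → ℕ) (j : Fin m) :
    cellCoord ε j '' cell m j = Icc 0 1 := by
  refine (mapsTo_cellCoord ε j).image_subset.antisymm fun u hu => ?_
  have hm : (m : ℝ) ≠ 0 := by exact_mod_cast (Nat.zero_le j).trans_lt j.2 |>.ne'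
  set v := if ε j = 0 then u else 1 - u with hv
  have hv01 : v ∈ Icc (0 : ℝ) 1 := by
    rw [hv]; split_ifs
    · exact hu
    · exact ⟨by linarith [hu.2], by linarith [hu.1]⟩
  have hmt : (m : ℝ) * ((j + v) / m) = j + v := by field_simp
  refine ⟨(j + v) / m, ?_, ?_⟩
  · simp only [cell, mem_preimage, mem_Icc, hmt]
    constructor <;> linarith [hv01.1, hv01.2]
  · unfold cellCoord
    rw [hmt, hv]
    split_ifs <;> ring

theorem cellCoord_of_mul_eq {ε : Fin m → ℕ} {j : Fin m} {t : ℝ} (ht : m * t = j) :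
    cellCoord ε j t = if ε j = 0 then 0 else 1 := by
  simp only [cellCoord, ht]
  split_ifs <;> ring

theorem cellCoord_of_mul_eq_add_one {ε : Fin m → ℕ} {j : Fin m} {t : ℝ}
    (ht : m * t = j + 1) :
    cellCoord ε j t = if ε j = 0 then 1 else 0 := by
  simp only [cellCoord, ht]
  split_ifs <;> ring

end Cells

section ZipperOperator

variable {X : Type*} [MetricSpace X] {m : ℕ} {S : Fin m → X → X} {z : ℕ → X}
  {ε : Fin m → ℕ} {f : ℝ → X}

noncomputable def zipperOp [NeZero m] (S : Fin m → X → X) (ε : Fin m → ℕ) (f : ℝ → X)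
    (t : ℝ) : X :=
  S (cellIndex m t) (f (cellCoord ε (cellIndex m t) t))

theorem dist_zipperOp_le [NeZero m] {c : NNReal} (hS : ∀ j, LipschitzWith c (S j)) {g : ℝ → X}
    {d : ℝ} (hfg : ∀ s, dist (f s) (g s) ≤ d) (t : ℝ) :
    dist (zipperOp S ε f t) (zipperOp S ε g t) ≤ c * d :=
  ((hS _).dist_le_mul _ _).trans (by gcongr; exact hfg _)

namespace IsZipper

variable (hz : IsZipper S z ε) (hf0 : f 0 = z 0) (hf1 : f 1 = z m)
include hz hf0 hf1

theorem apply_cellCoord_of_mul_eq {j : Fin m} {t : ℝ} (ht : m * t = j) :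
    S j (f (cellCoord ε j t)) = z j := by
  obtain ⟨hε, -, -, hz0, hzm⟩ := hz
  rw [cellCoord_of_mul_eq ht]
  rcases Nat.le_one_iff_eq_zero_or_eq_one.1 (hε j) with h | h
  · simpa [h, hf0] using hz0 j
  · simpa [h, hf1] using hzm j

theorem apply_cellCoord_of_mul_eq_add_one {j : Fin m} {t : ℝ} (ht : m * t = j + 1) :
    S j (f (cellCoord ε j t)) = z (j + 1) := by
  obtain ⟨hε, -, -, hz0, hzm⟩ := hz
  rw [cellCoord_of_mul_eq_add_one ht]
  rcases Nat.le_one_iff_eq_zero_or_eq_one.1 (hε j) with h | h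
  · simpa [h, hf1] using hzm j
  · simpa [h, hf0] using hz0 j

theorem apply_cellCoord_eq {i j : Fin m} {t : ℝ} (hi : t ∈ cell m i) (hj : t ∈ cell m j) :
    S i (f (cellCoord ε i t)) = S j (f (cellCoord ε j t)) := by
  wlog hij : i ≤ j generalizing i j
  · exact (this hj hi (le_of_not_ge hij)).symm
  rcases hij.eq_or_lt with rfl | hij
  · rfl
  have hji : (j : ℝ) = i + 1 := le_antisymm (hj.1.trans hi.2) (by exact_mod_cast hij)
  have hmt : (m : ℝ) * t = j := le_antisymm (hi.2.trans hji.ge) hj.1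
  rw [hz.apply_cellCoord_of_mul_eq hf0 hf1 hmt,
    hz.apply_cellCoord_of_mul_eq_add_one hf0 hf1 (hmt.trans hji)]
  congr 1
  exact_mod_cast hji.symm

variable [NeZero m]

theorem zipperOp_eq_of_mem_cell {j : Fin m} {t : ℝ} (ht : t ∈ cell m j) :
    zipperOp S ε f t = S j (f (cellCoord ε j t)) :=
  hz.apply_cellCoord_eq hf0 hf1 (mem_cell_cellIndex (cell_subset_Icc j.2 ht)) ht

theorem zipperOp_zero : zipperOp S ε f 0 = z 0 := by
  have h : (m : ℝ) * 0 = (⟨0, NeZero.pos m⟩ : Fin m) := by simp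
  rw [hz.zipperOp_eq_of_mem_cell hf0 hf1 (j := ⟨0, NeZero.pos m⟩) ⟨h.ge, by simp⟩,
    hz.apply_cellCoord_of_mul_eq hf0 hf1 h]

theorem zipperOp_one : zipperOp S ε f 1 = z m := by
  have hm := NeZero.pos m
  have h : (m : ℝ) * 1 = (⟨m - 1, by omega⟩ : Fin m) + 1 := by
    simp [Nat.cast_pred hm]
  rw [hz.zipperOp_eq_of_mem_cell hf0 hf1 (j := ⟨m - 1, by omega⟩) ⟨by simp [h], h.le⟩,
    hz.apply_cellCoord_of_mul_eq_add_one hf0 hf1 h, Nat.sub_add_cancel hm]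

theorem oscillationLE_zipperOp {c : NNReal} (hS : ∀ j, LipschitzWith c (S j)) {δ : ℝ}
    (hf : OscillationLE f (Icc 0 1) δ) : OscillationLE (zipperOp S ε f) (Icc 0 1) (c * δ) := by
  intro t _
  have hnear : ∀ᶠ s in 𝓝 t, ∀ j : Fin m, t ∈ cell m j → s ∈ cell m j →
      dist (f (cellCoord ε j s)) (f (cellCoord ε j t)) ≤ δ := by
    refine eventually_all.2 fun j => ?_
    by_cases htj : t ∈ cell m j
    · have h := ((continuous_cellCoord ε j).continuousWithinAt.tendsto_nhdsWithin
        (mapsTo_cellCoord ε j)).eventually (hf _ (mapsTo_cellCoord ε j htj))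
      exact (eventually_nhdsWithin_iff.1 h).mono fun s hs _ => hs
    · exact Eventually.of_forall fun s h => absurd h htj
  have hcover := eventually_forall_mem_imp_mem (fun j : Fin m => isClosed_cell m j) t
  filter_upwards [nhdsWithin_le_nhds hcover, nhdsWithin_le_nhds hnear, self_mem_nhdsWithin]
    with s hcover hnear hs
  have hsj := mem_cell_cellIndex (m := m) hs
  have htj := hcover _ hsj
  rw [hz.zipperOp_eq_of_mem_cell hf0 hf1 hsj, hz.zipperOp_eq_of_mem_cell hf0 hf1 htj]
  exact ((hS _).dist_le_mul _ _).trans (by gcongr; exact hnear _ htj hsj)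

theorem iterate_zipperOp_zero_one (n : ℕ) :
    (zipperOp S ε)^[n] f 0 = z 0 ∧ (zipperOp S ε)^[n] f 1 = z m := by
  induction n with
  | zero => exact ⟨hf0, hf1⟩
  | succ n ih =>
    rw [Function.iterate_succ_apply']
    exact ⟨hz.zipperOp_zero ih.1 ih.2, hz.zipperOp_one ih.1 ih.2⟩

theorem oscillationLE_iterate_zipperOp {c : NNReal} (hS : ∀ j, LipschitzWith c (S j)) {δ : ℝ}
    (hf : OscillationLE f (Icc 0 1) δ) (n : ℕ) :
    OscillationLE ((zipperOp S ε)^[n] f) (Icc 0 1) (c ^ n * δ) := by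
  induction n with
  | zero => simpa using hf
  | succ n ih =>
    obtain ⟨h0, h1⟩ := hz.iterate_zipperOp_zero_one hf0 hf1 n
    rw [Function.iterate_succ_apply', pow_succ', mul_assoc]
    exact hz.oscillationLE_zipperOp h0 h1 hS ih

end IsZipper

theorem dist_iterate_zipperOp_le [NeZero m] {c : NNReal} (hS : ∀ j, LipschitzWith c (S j))
    {M : ℝ} (hf : ∀ t, dist (f t) (zipperOp S ε f t) ≤ M) (n : ℕ) (t : ℝ) :
    dist ((zipperOp S ε)^[n] f t) ((zipperOp S ε)^[n + 1] f t) ≤ M * c ^ n := by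
  induction n generalizing t with
  | zero => simpa using hf t
  | succ n ih =>
    rw [Function.iterate_succ_apply', Function.iterate_succ_apply' _ (n + 1), pow_succ',
      mul_left_comm]
    exact dist_zipperOp_le hS ih t

end ZipperOperator

namespace IsZipper

variable {X : Type*} [MetricSpace X] {m : ℕ} [NeZero m] {S : Fin m → X → X} {z : ℕ → X}
  {ε : Fin m → ℕ}

theorem isAttractor_image (hz : IsZipper S z ε) {φ : ℝ → X} (hφ : ContinuousOn φ (Icc 0 1))
    (hφ0 : φ 0 = z 0) (hφ1 : φ 1 = z m) (hfix : ∀ t, zipperOp S ε φ t = φ t) :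
    IsAttractor S (φ '' Icc 0 1) := by
  refine ⟨(nonempty_Icc.2 zero_le_one).image φ, isCompact_Icc.image_of_continuousOn hφ, ?_⟩
  calc φ '' Icc 0 1 = ⋃ j : Fin m, φ '' cell m j := by
        rw [← iUnion_cell (m := m), image_iUnion]
    _ = ⋃ j, S j '' (φ '' Icc 0 1) := by
      refine iUnion_congr fun j => ?_
      rw [← image_cellCoord_cell ε j, image_image, image_image]
      exact image_congr fun t ht => by rw [← hfix, hz.zipperOp_eq_of_mem_cell hφ0 hφ1 ht]

theorem exists_continuousOn_zipperOp_eq_self [CompleteSpace X] (hz : IsZipper S z ε) :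
    ∃ φ : ℝ → X, ContinuousOn φ (Icc 0 1) ∧ φ 0 = z 0 ∧ φ 1 = z m ∧
      ∀ t, zipperOp S ε φ t = φ t := by
  obtain ⟨c, hc, hS⟩ := exists_lipschitzWith_lt_one hz.2.2.1
  set f : ℝ → X := fun t => if t < 1 then z 0 else z m
  set F : ℕ → ℝ → X := fun n => (zipperOp S ε)^[n] f
  have hf : ∀ t, f t ∈ ({z 0, z m} : Set X) := fun t => by
    simp only [f]
    split_ifs <;> simp
  obtain ⟨M, hM⟩ := Metric.isBounded_iff.1 ((toFinite ({z 0, z m} : Set X)).union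
    (finite_iUnion fun j => (toFinite ({z 0, z m} : Set X)).image (S j))).isBounded
  have hf0 : f 0 = z 0 := by simp [f]
  have hf1 : f 1 = z m := by simp [f]
  have hstep : ∀ n t, dist (F n t) (F (n + 1) t) ≤ M * c ^ n :=
    dist_iterate_zipperOp_le hS fun t =>
      hM (Or.inl (hf t)) (Or.inr (mem_iUnion.2 ⟨_, mem_image_of_mem _ (hf _)⟩))
  have hosc : ∀ n, OscillationLE (F n) (Icc 0 1) (c ^ n * M) :=
    hz.oscillationLE_iterate_zipperOp hf0 hf1 hS fun t _ =>
      Eventually.of_forall fun s => hM (Or.inl (hf s)) (Or.inl (hf t))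
  obtain ⟨φ, hφ⟩ := exists_tendstoUniformly_of_dist_le_geometric c.coe_nonneg hc hstep
  have hcont := continuousOn_of_tendstoUniformlyOn_of_oscillationLE hφ.tendstoUniformlyOn hosc
    (by simpa using (tendsto_pow_atTop_nhds_zero_of_lt_one c.coe_nonneg hc).mul_const M)
  have hends := hz.iterate_zipperOp_zero_one hf0 hf1
  refine ⟨φ, hcont, tendsto_nhds_unique (hφ.tendsto_at 0)
      (tendsto_const_nhds.congr fun n => (hends n).1.symm),
    tendsto_nhds_unique (hφ.tendsto_at 1) (tendsto_const_nhds.congr fun n => (hends n).2.symm),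
    fun t => tendsto_nhds_unique (((hS _).continuous.tendsto _).comp (hφ.tendsto_at _)) ?_⟩
  exact ((hφ.tendsto_at t).comp (tendsto_add_atTop_nat 1)).congr fun n =>
    congrFun (Function.iterate_succ_apply' _ n f) t

end IsZipper

theorem stmt3_general {X : Type*} [MetricSpace X] [CompleteSpace X] {m : ℕ}
    (S : Fin m → X → X) (z : ℕ → X) (ε : Fin m → ℕ) (hzip : IsZipper S z ε)
    (K : Set X) (hK : IsAttractor S K) :
    IsConnected K ∧ IsPathConnected K := by
  have := hK.neZero
  obtain ⟨φ, hφ, hφ0, hφ1, hfix⟩ := hzip.exists_continuousOn_zipperOp_eq_self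
  have hKφ : K = φ '' Icc 0 1 := hK.unique hzip.2.2.1 (hzip.isAttractor_image hφ hφ0 hφ1 hfix)
  have hpc : IsPathConnected K := hKφ ▸
    ((convex_Icc (0 : ℝ) 1).isPathConnected (nonempty_Icc.2 zero_le_one)).image' hφ
  exact ⟨hpc.isConnected, hpc⟩

/-- The attractor of any zipper in a complete metric space is connected,
in fact path-connected. -/
theorem stmt3 {X : Type*} [MetricSpace X] [CompleteSpace X] {m : ℕ} (hm : 0 < m)
    (S : Fin m → X → X) (z : ℕ → X) (ε : Fin m → ℕ) (hzip : IsZipper S z ε)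
    (K : Set X) (hK : IsAttractor S K) :
    IsConnected K ∧ IsPathConnected K :=
  stmt3_general S z ε hzip K hK
end

section
/- For any zipper S = {S_1,…,S_m} with vertices (z_0,…,z_m) and signature ε, and any partition 0 = x_0 < x_1 < … < x_m = 1, there exists a unique continuous map γ : [0,1] → K(S) such that γ(x_i) = z_i for all i and S_i ∘ γ = γ ∘ T_i for all i, where T_i(t) = x_{i-1+ε_i}(1-t) + x_{i-ε_i}·t; moreover γ is Hölder continuous. -/
open Set

/-!
The parametrization is the fixed point of the operator that replaces `f` on the piece
`[x_i, x_{i+1}]` by `S_i ∘ f ∘ T_i⁻¹`; it is a contraction for the uniform distance of functions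
`[0,1] → X`. The zipper conditions `S_j z_0 = z_{j+ε_j}` and `S_j z_m = z_{j+1-ε_j}` make two
adjacent pieces give the same value at their common vertex as soon as `f 0 = z_0` and
`f 1 = z_m`, a closed condition that the operator preserves. Hence the fixed point is
self-similar, and any bounded self-similar map is a fixed point, which gives uniqueness.

For Hölder continuity let `δ` be smaller than every piece and `r < 1` a common Lipschitz
constant of the `S_i`. For `n ≥ 1`, two points at distance at most `δ^n` lie in one piece or in
two adjacent ones; pulling back by the `T_i` shows by induction on `n` that their images are at
most `2 r^n diam γ([0,1])` apart. This is a Hölder bound with exponent `log r / log δ`.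
-/
open Filter Topology Function
open scoped UniformConvergence NNReal ENNReal

theorem pos_of_apply_ne {α : Type*} (x : ℕ → α) {m : ℕ} (h : x 0 ≠ x m) : 0 < m :=
  Nat.pos_of_ne_zero fun hm => h (by rw [hm])

theorem MonotoneOn.apply_le_apply_succ {α : Type*} [Preorder α] {x : ℕ → α} {m i : ℕ}
    (hx : MonotoneOn x (Iic m)) (hi : i < m) : x i ≤ x (i + 1) :=
  hx (mem_Iic.2 hi.le) (mem_Iic.2 hi) i.le_succ

theorem exists_mem_Icc_succ {α : Type*} [LinearOrder α] (x : ℕ → α) {s : α} {n : ℕ}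
    (hn : 0 < n) (hs : s ∈ Icc (x 0) (x n)) : ∃ i < n, s ∈ Icc (x i) (x (i + 1)) := by
  induction n, hn using Nat.le_induction with
  | base => exact ⟨0, zero_lt_one, hs⟩
  | succ n hn ih =>
    by_cases h : s ≤ x n
    · obtain ⟨i, hi, his⟩ := ih ⟨hs.1, h⟩
      exact ⟨i, hi.trans n.lt_succ_self, his⟩
    · exact ⟨n, n.lt_succ_self, (not_le.1 h).le, hs.2⟩

section zipT

variable {m : ℕ} {x : ℕ → ℝ} {ε : Fin m → ℕ} {i : Fin m}

theorem zipT_eq_lineMap (x : ℕ → ℝ) (ε : Fin m → ℕ) (i : Fin m) :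
    zipT x ε i = AffineMap.lineMap (x (i + ε i)) (x (i + 1 - ε i)) := by
  ext t
  rw [zipT, AffineMap.lineMap_apply_ring]
  ring

theorem zipT_endpoints (h : ε i ≤ 1) :
    (i + ε i = i ∧ i + 1 - ε i = i + 1) ∨ (i + ε i = i + 1 ∧ i + 1 - ε i = i) := by
  omega

theorem image_zipT (h : ε i ≤ 1) (hx : x i ≤ x (i + 1)) :
    zipT x ε i '' Icc 0 1 = Icc (x i) (x (i + 1)) := by
  rw [zipT_eq_lineMap, ← segment_eq_image_lineMap, segment_eq_uIcc]
  rcases zipT_endpoints h with ⟨h0, h1⟩ | ⟨h0, h1⟩ <;> rw [h0, h1]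
  exacts [uIcc_of_le hx, uIcc_of_ge hx]

theorem dist_zipT (h : ε i ≤ 1) (s t : ℝ) :
    dist (zipT x ε i s) (zipT x ε i t) = dist s t * dist (x i) (x (i + 1)) := by
  rw [zipT_eq_lineMap, dist_lineMap_lineMap]
  rcases zipT_endpoints h with ⟨h0, h1⟩ | ⟨h0, h1⟩ <;> rw [h0, h1]
  rw [dist_comm (x _)]

theorem exists_zipT_eq_vertex (h : ε i ≤ 1) {k : ℕ} (hk : k = i ∨ k = i + 1) :
    ∃ e ∈ ({0, 1} : Set ℝ), zipT x ε i e = x k := by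
  rcases (by omega : k = i + ε i ∨ k = i + 1 - ε i) with rfl | rfl
  · exact ⟨0, by simp, by simp [zipT]⟩
  · exact ⟨1, by simp, by simp [zipT]⟩

theorem zipT_injective (hε : ε i ≤ 1) (hx : StrictMonoOn x (Iic m)) : Injective (zipT x ε i) := by
  rw [zipT_eq_lineMap]
  exact AffineMap.lineMap_injective ℝ
    (hx.injOn.ne (by simp only [mem_Iic]; omega) (by simp only [mem_Iic]; omega) (by omega))

theorem zipT_mem_Icc (hε : ε i ≤ 1) (hx : x i ≤ x (i + 1)) {t : ℝ} (ht : t ∈ Icc (0:ℝ) 1) :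
    zipT x ε i t ∈ Icc (x i) (x (i + 1)) :=
  image_zipT hε hx ▸ mem_image_of_mem _ ht

theorem zipT_mapsTo (hε : ε i ≤ 1) (hx : MonotoneOn x (Iic m)) (hx0 : x 0 = 0) (hxm : x m = 1) :
    MapsTo (zipT x ε i) (Icc 0 1) (Icc 0 1) := fun t ht => by
  have h := zipT_mem_Icc hε (hx.apply_le_apply_succ i.isLt) ht
  rw [← hx0, ← hxm]
  exact ⟨(hx (Nat.zero_le m) i.isLt.le (Nat.zero_le _)).trans h.1,
    h.2.trans (hx (mem_Iic.2 i.isLt) (mem_Iic.2 le_rfl) i.isLt)⟩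

theorem exists_zipT_eq (hε : ∀ i, ε i ≤ 1) (hx : MonotoneOn x (Iic m)) (hx0 : x 0 = 0)
    (hxm : x m = 1) (s : Icc (0:ℝ) 1) : ∃ p : Fin m × Icc (0:ℝ) 1, zipT x ε p.1 p.2 = s := by
  have hm : 0 < m := pos_of_apply_ne x (by rw [hx0, hxm]; norm_num)
  obtain ⟨i, hi, hs⟩ := exists_mem_Icc_succ x hm (by rw [hx0, hxm]; exact s.2)
  rw [← image_zipT (i := ⟨i, hi⟩) (hε _) (hx.apply_le_apply_succ hi)] at hs
  obtain ⟨t, ht, hts⟩ := hs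
  exact ⟨(⟨i, hi⟩, ⟨t, ht⟩), hts⟩

end zipT

section vertices

variable {X : Type*} [MetricSpace X] {m : ℕ} {S : Fin m → X → X} {z : ℕ → X} {ε : Fin m → ℕ}
  {x : ℕ → ℝ} {f : Icc (0:ℝ) 1 → X}

theorem IsZipper.apply_eq_of_zipT_eq_vertex (hzip : IsZipper S z ε) (hx : StrictMonoOn x (Iic m))
    (hf0 : f 0 = z 0) (hf1 : f 1 = z m) {i : Fin m} {t : Icc (0:ℝ) 1} {k : ℕ} (hk : k ≤ m)
    (h : zipT x ε i t = x k) : S i (f t) = z k := by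
  obtain ⟨hε, -, -, hz0, hzm⟩ := hzip
  have hεi := hε i
  have hmem := zipT_mem_Icc (hε i) (hx.monotoneOn.apply_le_apply_succ i.isLt) t.2
  rw [h, mem_Icc, hx.le_iff_le i.isLt.le hk, hx.le_iff_le hk (mem_Iic.2 i.isLt)] at hmem
  rcases (by omega : k = i + ε i ∨ k = i + 1 - ε i) with rfl | rfl
  · obtain rfl : t = 0 := Subtype.ext (zipT_injective hεi hx (h.trans (by simp [zipT])))
    rw [hf0, hz0]
  · obtain rfl : t = 1 := Subtype.ext (zipT_injective hεi hx (h.trans (by simp [zipT])))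
    rw [hf1, hzm]

theorem IsZipper.apply_eq_apply_of_zipT_eq (hzip : IsZipper S z ε)
    (hx : StrictMonoOn x (Iic m)) (hf0 : f 0 = z 0) (hf1 : f 1 = z m) {i j : Fin m}
    {t u : Icc (0:ℝ) 1} (h : zipT x ε i t = zipT x ε j u) : S i (f t) = S j (f u) := by
  wlog hij : i ≤ j generalizing i j t u
  · exact (this h.symm (le_of_not_ge hij)).symm
  rcases hij.eq_or_lt with rfl | hij
  · rw [Subtype.ext (zipT_injective (hzip.1 i) hx h)]
  · have hti := zipT_mem_Icc (hzip.1 i) (hx.monotoneOn.apply_le_apply_succ i.isLt) t.2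
    have huj := zipT_mem_Icc (hzip.1 j) (hx.monotoneOn.apply_le_apply_succ j.isLt) u.2
    have hij' : x (i + 1) ≤ x j := hx.monotoneOn (mem_Iic.2 i.isLt) j.isLt.le (by omega)
    have hv : zipT x ε i t = x (i + 1) := le_antisymm hti.2 (by linarith [huj.1])
    rw [hzip.apply_eq_of_zipT_eq_vertex hx hf0 hf1 i.isLt hv,
      hzip.apply_eq_of_zipT_eq_vertex hx hf0 hf1 i.isLt (h ▸ hv)]

end vertices

theorem exists_lipschitzWith_of_contractingWith {X ι : Type*} [EMetricSpace X] [Fintype ι]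
    {S : ι → X → X} (h : ∀ i, ∃ r, ContractingWith r (S i)) :
    ∃ r, 0 < r ∧ r < 1 ∧ ∀ i, LipschitzWith r (S i) := by
  choose ρ hρ using h
  refine ⟨Finset.univ.sup ρ ⊔ 2⁻¹, lt_sup_of_lt_right (by norm_num),
    sup_lt_iff.2 ⟨(Finset.sup_lt_iff zero_lt_one).2 fun i _ => (hρ i).1, by norm_num⟩,
    fun i => (hρ i).2.weaken (le_sup_of_le_left (Finset.le_sup (Finset.mem_univ i)))⟩

theorem ContractingWith.mem_of_isFixedPt {X : Type*} [MetricSpace X] [CompleteSpace X]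
    {f : X → X} {r : ℝ≥0} {s : Set X} {p : X} (hf : ContractingWith r f) (hs : IsClosed s)
    (hne : s.Nonempty) (hfs : MapsTo f s s) (hp : IsFixedPt f p) : p ∈ s := by
  obtain ⟨q, hqs, hq, -⟩ :=
    ContractingWith.exists_fixedPoint' hs.isComplete hfs (hf.restrict hfs) hne.some_mem
      (edist_ne_top _ _)
  exact hf.fixedPoint_unique' hp hq ▸ hqs

section attractor

variable {X : Type*} [MetricSpace X] {m : ℕ} {S : Fin m → X → X} {z : ℕ → X} {ε : Fin m → ℕ}
  {K : Set X}

theorem IsAttractor.mapsTo (hK : IsAttractor S K) (i : Fin m) : MapsTo (S i) K K := by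
  intro a ha
  rw [hK.2.2]
  exact mem_iUnion_of_mem i (mem_image_of_mem _ ha)

/-- `(z 0, z m)` is the fixed point of a contraction of `X × X` preserving `K ×ˢ K`, built from
the first and the last map of the zipper. -/
theorem IsZipper.vertex_mem [CompleteSpace X] (hzip : IsZipper S z ε) (hK : IsAttractor S K)
    (hm : 0 < m) : z 0 ∈ K ∧ z m ∈ K := by
  obtain ⟨hε, -, hcon, hz0, hzm⟩ := hzip
  obtain ⟨r, -, hr, hS⟩ := exists_lipschitzWith_of_contractingWith hcon
  let i₀ : Fin m := ⟨0, hm⟩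
  let iₗ : Fin m := ⟨m - 1, Nat.sub_lt hm one_pos⟩
  have hpick (b : Prop) [Decidable b] :
      LipschitzWith 1 fun p : X × X => if b then p.1 else p.2 := by
    split_ifs
    exacts [LipschitzWith.prod_fst, LipschitzWith.prod_snd]
  let P : X × X → X × X := fun p =>
    (S i₀ (if ε i₀ = 0 then p.1 else p.2), S iₗ (if ε iₗ = 0 then p.2 else p.1))
  have hP : ContractingWith r P := by
    refine ⟨hr, ?_⟩
    simpa using ((hS i₀).comp (hpick (ε i₀ = 0))).prodMk ((hS iₗ).comp (hpick (¬ε iₗ = 0)))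
  have hfix : IsFixedPt P (z 0, z m) := by
    have h₀ : (i₀ : ℕ) = 0 := rfl
    have hₗ : (iₗ : ℕ) + 1 = m := Nat.sub_add_cancel hm
    have := hε i₀; have := hε iₗ
    refine Prod.ext ?_ ?_ <;> dsimp only [P] <;> split_ifs
    · rw [hz0]; congr 1; omega
    · rw [hzm]; congr 1; omega
    · rw [hzm]; congr 1; omega
    · rw [hz0]; congr 1; omega
  have hmaps : MapsTo P (K ×ˢ K) (K ×ˢ K) := fun p hp =>
    ⟨hK.mapsTo i₀ (by split_ifs; exacts [hp.1, hp.2]),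
      hK.mapsTo iₗ (by split_ifs; exacts [hp.2, hp.1])⟩
  exact hP.mem_of_isFixedPt (hK.2.1.isClosed.prod hK.2.1.isClosed) (hK.1.prod hK.1) hmaps hfix

end attractor

theorem UniformFun.edist_ne_top_of_forall_mem {α X : Type*} [PseudoMetricSpace X] {K : Set X}
    (hK : Bornology.IsBounded K) {f g : α →ᵤ X} (hf : ∀ a, toFun f a ∈ K)
    (hg : ∀ a, toFun g a ∈ K) : edist f g ≠ ∞ :=
  ne_top_of_le_ne_top hK.ediam_ne_top
    (UniformFun.edist_le.2 fun a => Metric.edist_le_ediam_of_mem (hf a) (hg a))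

section operator

variable {X : Type*} [MetricSpace X] {m : ℕ} {S : Fin m → X → X} {z : ℕ → X} {ε : Fin m → ℕ}
  {c : Icc (0:ℝ) 1 → Fin m × Icc (0:ℝ) 1}

/-- The operator whose fixed point is the parametrization: `c s` names a piece containing `s`
together with the preimage of `s` under the affine map of that piece. -/
def zipOp (S : Fin m → X → X) (c : Icc (0:ℝ) 1 → Fin m × Icc (0:ℝ) 1)
    (f : Icc (0:ℝ) 1 →ᵤ X) : Icc (0:ℝ) 1 →ᵤ X :=
  UniformFun.ofFun fun s => S (c s).1 (UniformFun.toFun f (c s).2)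

theorem lipschitzWith_zipOp {r : ℝ≥0} (hS : ∀ i, LipschitzWith r (S i)) (c) :
    LipschitzWith r (zipOp S c) :=
  UniformFun.lipschitzWith_ofFun_iff.2 fun s => by
    simpa [Function.comp_def] using (hS (c s).1).comp (UniformFun.lipschitzWith_eval (c s).2)

theorem IsZipper.exists_contractingWith_zipOp (hzip : IsZipper S z ε) (c) :
    ∃ r, ContractingWith r (zipOp S c) :=
  let ⟨r, _, hr, hS⟩ := exists_lipschitzWith_of_contractingWith hzip.2.2.1
  ⟨r, hr, lipschitzWith_zipOp hS c⟩

end operator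

theorem isFixedPt_zipOp_of_selfSimilar {X : Type*} {m : ℕ} {S : Fin m → X → X}
    {ε : Fin m → ℕ} {x : ℕ → ℝ} {c : Icc (0:ℝ) 1 → Fin m × Icc (0:ℝ) 1} {γ : ℝ → X}
    (hc : ∀ s, zipT x ε (c s).1 (c s).2 = s)
    (hγ : ∀ i, ∀ t ∈ Icc (0:ℝ) 1, S i (γ t) = γ (zipT x ε i t)) :
    IsFixedPt (zipOp S c) (UniformFun.ofFun ((Icc 0 1).domRestrict γ)) :=
  UniformFun.toFun.injective <| funext fun s => (hγ _ _ (c s).2.2).trans (congrArg γ (hc s))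

section fixedPoint

variable {X : Type*} [MetricSpace X] {m : ℕ} {S : Fin m → X → X} {z : ℕ → X} {ε : Fin m → ℕ}
  {x : ℕ → ℝ} {K : Set X} {c : Icc (0:ℝ) 1 → Fin m × Icc (0:ℝ) 1} {γ : ℝ → X}

theorem IsZipper.selfSimilar_of_isFixedPt_zipOp (hzip : IsZipper S z ε)
    (hx : StrictMonoOn x (Iic m)) (hx0 : x 0 = 0) (hxm : x m = 1)
    (hc : ∀ s, zipT x ε (c s).1 (c s).2 = s) (hγ0 : γ 0 = z 0) (hγ1 : γ 1 = z m)
    (hfix : IsFixedPt (zipOp S c) (UniformFun.ofFun ((Icc 0 1).domRestrict γ))) :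
    ∀ i, ∀ t ∈ Icc (0:ℝ) 1, S i (γ t) = γ (zipT x ε i t) := by
  intro i t ht
  let s : Icc (0:ℝ) 1 := ⟨zipT x ε i t, zipT_mapsTo (hzip.1 i) hx.monotoneOn hx0 hxm ht⟩
  have hs : S (c s).1 (γ (c s).2) = γ s := congrArg (UniformFun.toFun · s) hfix
  rw [← hs]
  exact hzip.apply_eq_apply_of_zipT_eq (f := (Icc 0 1).domRestrict γ) hx hγ0 hγ1
    (t := ⟨t, ht⟩) (hc s).symm

theorem IsZipper.apply_vertex_of_isFixedPt_zipOp (hzip : IsZipper S z ε)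
    (hx : StrictMonoOn x (Iic m)) (hx0 : x 0 = 0) (hxm : x m = 1)
    (hc : ∀ s, zipT x ε (c s).1 (c s).2 = s) (hγ0 : γ 0 = z 0) (hγ1 : γ 1 = z m)
    (hfix : IsFixedPt (zipOp S c) (UniformFun.ofFun ((Icc 0 1).domRestrict γ))) {k : ℕ}
    (hk : k ≤ m) : γ (x k) = z k := by
  have hxk : x k ∈ Icc (0:ℝ) 1 := by
    rw [← hx0, ← hxm]
    exact ⟨hx.monotoneOn (Nat.zero_le m) hk (Nat.zero_le k),
      hx.monotoneOn hk (mem_Iic.2 le_rfl) hk⟩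
  have hs : S (c ⟨x k, hxk⟩).1 (γ (c ⟨x k, hxk⟩).2) = γ (x k) :=
    congrArg (fun f : Icc (0:ℝ) 1 →ᵤ X => UniformFun.toFun f ⟨x k, hxk⟩) hfix
  rw [← hs]
  exact hzip.apply_eq_of_zipT_eq_vertex (f := (Icc 0 1).domRestrict γ) hx hγ0 hγ1 hk (hc _)

theorem IsZipper.exists_isFixedPt_zipOp [CompleteSpace X] (hzip : IsZipper S z ε)
    (hK : IsAttractor S K) (hx : StrictMonoOn x (Iic m)) (hx0 : x 0 = 0) (hxm : x m = 1)
    (hc : ∀ s, zipT x ε (c s).1 (c s).2 = s) :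
    ∃ f, IsFixedPt (zipOp S c) f ∧ UniformFun.toFun f 0 = z 0 ∧ UniformFun.toFun f 1 = z m ∧
      ∀ s, UniformFun.toFun f s ∈ K := by
  obtain ⟨r, hΦ⟩ := hzip.exists_contractingWith_zipOp c
  let A : Set (Icc (0:ℝ) 1 →ᵤ X) := {f | UniformFun.toFun f 0 = z 0 ∧
    UniformFun.toFun f 1 = z m ∧ ∀ s, UniformFun.toFun f s ∈ K}
  have heval (s : Icc (0:ℝ) 1) : Continuous (UniformFun.toFun · s : (Icc (0:ℝ) 1 →ᵤ X) → X) :=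
    (UniformFun.lipschitzWith_eval s).continuous
  have hA : IsClosed A := by
    simp only [A, ofPred_and, ofPred_forall]
    exact (isClosed_eq (heval 0) continuous_const).inter
      ((isClosed_eq (heval 1) continuous_const).inter
        (isClosed_iInter fun s => hK.2.1.isClosed.preimage (heval s)))
  have hΦA : MapsTo (zipOp S c) A A := fun f ⟨hf0, hf1, hfK⟩ =>
    ⟨hzip.apply_eq_of_zipT_eq_vertex hx hf0 hf1 (Nat.zero_le m) ((hc 0).trans hx0.symm),
      hzip.apply_eq_of_zipT_eq_vertex hx hf0 hf1 le_rfl ((hc 1).trans hxm.symm),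
      fun s => hK.mapsTo _ (hfK _)⟩
  obtain ⟨hz0K, hzmK⟩ := hzip.vertex_mem hK (pos_of_apply_ne x (by rw [hx0, hxm]; norm_num))
  let f₀ : Icc (0:ℝ) 1 →ᵤ X := UniformFun.ofFun fun s => if (s : ℝ) = 1 then z m else z 0
  have hf₀ : f₀ ∈ A :=
    ⟨by simp [f₀], by simp [f₀], fun s => by dsimp [f₀]; split_ifs <;> assumption⟩
  obtain ⟨f, hfA, hfix, -⟩ := ContractingWith.exists_fixedPoint' hA.isComplete hΦA
    (hΦ.restrict hΦA) hf₀
    (UniformFun.edist_ne_top_of_forall_mem hK.2.1.isBounded hf₀.2.2 (hΦA hf₀).2.2)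
  exact ⟨f, hfix, hfA⟩

theorem IsZipper.exists_selfSimilar [CompleteSpace X] (hzip : IsZipper S z ε)
    (hK : IsAttractor S K) (hx : StrictMonoOn x (Iic m)) (hx0 : x 0 = 0) (hxm : x m = 1) :
    ∃ γ : ℝ → X, MapsTo γ (Icc 0 1) K ∧ (∀ k ≤ m, γ (x k) = z k) ∧
      ∀ i, ∀ t ∈ Icc (0:ℝ) 1, S i (γ t) = γ (zipT x ε i t) := by
  choose c hc using exists_zipT_eq hzip.1 hx.monotoneOn hx0 hxm
  obtain ⟨f, hfix, hf0, hf1, hfK⟩ := hzip.exists_isFixedPt_zipOp hK hx hx0 hxm hc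
  let γ := IccExtend zero_le_one (UniformFun.toFun f)
  have hγf : (Icc 0 1).domRestrict γ = UniformFun.toFun f := funext (IccExtend_val _ _)
  have hγ0 : γ 0 = z 0 := (IccExtend_val _ _ 0).trans hf0
  have hγ1 : γ 1 = z m := (IccExtend_val _ _ 1).trans hf1
  rw [← UniformFun.ofFun_toFun f, ← hγf] at hfix
  exact ⟨γ, fun t ht => by simpa only [γ, IccExtend_of_mem _ _ ht] using hfK _,
    fun k hk => hzip.apply_vertex_of_isFixedPt_zipOp hx hx0 hxm hc hγ0 hγ1 hfix hk,
    hzip.selfSimilar_of_isFixedPt_zipOp hx hx0 hxm hc hγ0 hγ1 hfix⟩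

theorem IsZipper.eqOn_of_selfSimilar (hzip : IsZipper S z ε) (hK : Bornology.IsBounded K)
    (hx : MonotoneOn x (Iic m)) (hx0 : x 0 = 0) (hxm : x m = 1) {γ γ' : ℝ → X}
    (hγK : MapsTo γ (Icc 0 1) K) (hγ : ∀ i, ∀ t ∈ Icc (0:ℝ) 1, S i (γ t) = γ (zipT x ε i t))
    (hγ'K : MapsTo γ' (Icc 0 1) K)
    (hγ' : ∀ i, ∀ t ∈ Icc (0:ℝ) 1, S i (γ' t) = γ' (zipT x ε i t)) :
    EqOn γ γ' (Icc 0 1) := by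
  choose c hc using exists_zipT_eq hzip.1 hx hx0 hxm
  obtain ⟨r, hΦ⟩ := hzip.exists_contractingWith_zipOp c
  have h := (hΦ.eq_or_edist_eq_top_of_fixedPoints (isFixedPt_zipOp_of_selfSimilar hc hγ)
    (isFixedPt_zipOp_of_selfSimilar hc hγ')).resolve_right
    (UniformFun.edist_ne_top_of_forall_mem hK (fun s => hγK s.2) fun s => hγ'K s.2)
  exact fun t ht => congrFun (UniformFun.ofFun.injective h) ⟨t, ht⟩

end fixedPoint

theorem exists_holderOnWith_of_dist_le_pow {Y Z : Type*} [MetricSpace Y] [PseudoMetricSpace Z]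
    {f : Y → Z} {A : Set Y} {δ C : ℝ} {r : ℝ≥0} (hδ0 : 0 < δ) (hδ1 : δ < 1) (hr0 : 0 < r)
    (hr1 : r < 1) (hA : ∀ s ∈ A, ∀ t ∈ A, dist s t ≤ 1)
    (hf : ∀ n : ℕ, ∀ s ∈ A, ∀ t ∈ A, dist s t ≤ δ ^ n → dist (f s) (f t) ≤ C * r ^ n) :
    ∃ C' α : ℝ≥0, 0 < α ∧ HolderOnWith C' α f A := by
  have hα : 0 < Real.logb δ r := Real.logb_pos_of_base_lt_one hδ0 hδ1 hr0 hr1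
  refine ⟨(C / r).toNNReal, (Real.logb δ r).toNNReal, Real.toNNReal_pos.2 hα, ?_⟩
  intro s hs t ht
  rcases eq_or_ne s t with rfl | hst
  · simp
  rw [edist_dist, edist_dist, Real.coe_toNNReal _ hα.le,
    ENNReal.ofReal_rpow_of_nonneg dist_nonneg hα.le, ← ENNReal.ofReal_coe_nnreal,
    ← ENNReal.ofReal_mul (by positivity)]
  refine ENNReal.ofReal_le_ofReal ?_
  obtain ⟨n, hn, hn'⟩ := exists_nat_pow_near_of_lt_one (dist_pos.2 hst) (hA s hs t ht) hδ0 hδ1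
  have hscale : (δ ^ (n + 1)) ^ Real.logb δ r = r ^ (n + 1) := by
    rw [← Real.rpow_natCast, ← Real.rpow_mul hδ0.le, mul_comm, Real.rpow_mul hδ0.le,
      Real.rpow_logb hδ0 hδ1.ne (NNReal.coe_pos.2 hr0), Real.rpow_natCast]
  have hC : 0 ≤ C := by simpa using (dist_nonneg.trans (hf 0 s hs s hs (by simp)))
  calc dist (f s) (f t) ≤ C * r ^ n := hf n s hs t ht hn'
    _ = C / r * (δ ^ (n + 1)) ^ Real.logb δ r := by
      rw [hscale]; field_simp; ring
    _ ≤ (C / r).toNNReal * dist s t ^ Real.logb δ r := by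
      gcongr
      exact Real.le_coe_toNNReal _

section holder

variable {X : Type*} [MetricSpace X] {m : ℕ} {S : Fin m → X → X} {z : ℕ → X} {ε : Fin m → ℕ}
  {x : ℕ → ℝ} {γ : ℝ → X} {r : ℝ≥0} {δ D : ℝ} {i : Fin m}

theorem dist_apply_zipT_le (hε : ε i ≤ 1) (hS : LipschitzWith r (S i))
    (hγ : ∀ t ∈ Icc (0:ℝ) 1, S i (γ t) = γ (zipT x ε i t)) (hδ0 : 0 < δ)
    (hδ : δ ≤ x (i + 1) - x i) {a b : ℝ} (ha : a ∈ Icc (0:ℝ) 1) (hb : b ∈ Icc (0:ℝ) 1)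
    {n : ℕ} {B : ℝ} (hab : dist (zipT x ε i a) (zipT x ε i b) ≤ δ ^ (n + 1))
    (hB : dist a b ≤ δ ^ n → dist (γ a) (γ b) ≤ B) :
    dist (γ (zipT x ε i a)) (γ (zipT x ε i b)) ≤ r * B := by
  rw [← hγ a ha, ← hγ b hb]
  refine (hS.dist_le_mul _ _).trans (mul_le_mul_of_nonneg_left (hB ?_) r.2)
  rw [dist_zipT hε] at hab
  refine le_of_mul_le_mul_right ?_ hδ0
  have hgap : δ ≤ dist (x i) (x (i + 1)) := by
    rw [dist_comm, Real.dist_eq]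
    exact hδ.trans (le_abs_self _)
  calc dist a b * δ ≤ dist a b * dist (x i) (x (i + 1)) := by gcongr
    _ ≤ δ ^ n * δ := by rw [← pow_succ]; exact hab

theorem dist_apply_vertex_le (hε : ε i ≤ 1) (hS : LipschitzWith r (S i))
    (hγ : ∀ t ∈ Icc (0:ℝ) 1, S i (γ t) = γ (zipT x ε i t)) (hδ0 : 0 < δ)
    (hδ : δ ≤ x (i + 1) - x i) {n : ℕ}
    (hE : ∀ s ∈ Icc (0:ℝ) 1, ∀ e ∈ ({0, 1} : Set ℝ), dist s e ≤ δ ^ n →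
      dist (γ s) (γ e) ≤ D * r ^ n)
    {s : ℝ} (hs : s ∈ Icc (x i) (x (i + 1))) {k : ℕ} (hk : k = i ∨ k = i + 1)
    (hsk : dist s (x k) ≤ δ ^ (n + 1)) : dist (γ s) (γ (x k)) ≤ D * r ^ (n + 1) := by
  rw [← image_zipT hε (by linarith)] at hs
  obtain ⟨a, ha, rfl⟩ := hs
  obtain ⟨e, he, hek⟩ := exists_zipT_eq_vertex (x := x) hε hk
  have heI : e ∈ Icc (0:ℝ) 1 := by rcases he with rfl | rfl <;> simp
  rw [← hek] at hsk ⊢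
  calc _ ≤ r * (D * r ^ n) := dist_apply_zipT_le hε hS hγ hδ0 hδ ha heI hsk (hE a ha e he)
    _ = D * r ^ (n + 1) := by ring

theorem dist_apply_endpoint_le_succ (hε : ∀ i, ε i ≤ 1) (hS : ∀ i, LipschitzWith r (S i))
    (hγ : ∀ i, ∀ t ∈ Icc (0:ℝ) 1, S i (γ t) = γ (zipT x ε i t)) (hδ0 : 0 < δ) (hδ1 : δ < 1)
    (hδ : ∀ i : Fin m, δ ≤ x (i + 1) - x i) (hx0 : x 0 = 0) (hxm : x m = 1) {n : ℕ}
    (hE : ∀ s ∈ Icc (0:ℝ) 1, ∀ e ∈ ({0, 1} : Set ℝ), dist s e ≤ δ ^ n →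
      dist (γ s) (γ e) ≤ D * r ^ n) :
    ∀ s ∈ Icc (0:ℝ) 1, ∀ e ∈ ({0, 1} : Set ℝ), dist s e ≤ δ ^ (n + 1) →
      dist (γ s) (γ e) ≤ D * r ^ (n + 1) := by
  intro s hs e he hse
  have hm : 0 < m := pos_of_apply_ne x (by rw [hx0, hxm]; norm_num)
  have hsδ : dist s e ≤ δ := hse.trans (pow_le_of_le_one hδ0.le hδ1.le n.succ_ne_zero)
  rcases he with rfl | rfl
  · let i₀ : Fin m := ⟨0, hm⟩
    have hs₀ : s ∈ Icc (x i₀) (x (i₀ + 1)) := by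
      rw [Real.dist_eq, sub_zero, abs_of_nonneg hs.1] at hsδ
      have := hδ i₀
      simp only [i₀, hx0] at this ⊢
      exact ⟨hs.1, by linarith⟩
    simpa [hx0] using dist_apply_vertex_le (hε i₀) (hS i₀) (hγ i₀) hδ0 (hδ i₀) hE hs₀
      (k := 0) (Or.inl rfl) (by rwa [hx0])
  · let iₗ : Fin m := ⟨m - 1, Nat.sub_lt hm one_pos⟩
    have hₗ : (iₗ : ℕ) + 1 = m := Nat.sub_add_cancel hm
    have hsₗ : s ∈ Icc (x iₗ) (x (iₗ + 1)) := by
      rw [Real.dist_eq, abs_sub_comm, abs_of_nonneg (sub_nonneg.2 hs.2)] at hsδ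
      have := hδ iₗ
      rw [hₗ, hxm] at this ⊢
      exact ⟨by linarith, hs.2⟩
    simpa [hxm] using dist_apply_vertex_le (hε iₗ) (hS iₗ) (hγ iₗ) hδ0 (hδ iₗ) hE hsₗ
      (k := m) (Or.inr hₗ.symm) (by rwa [hxm])

theorem dist_apply_le_succ (hε : ∀ i, ε i ≤ 1) (hS : ∀ i, LipschitzWith r (S i))
    (hγ : ∀ i, ∀ t ∈ Icc (0:ℝ) 1, S i (γ t) = γ (zipT x ε i t)) (hδ0 : 0 < δ) (hδ1 : δ < 1)
    (hδ : ∀ i : Fin m, δ ≤ x (i + 1) - x i) (hx0 : x 0 = 0) (hxm : x m = 1) {n : ℕ}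
    (hE : ∀ s ∈ Icc (0:ℝ) 1, ∀ e ∈ ({0, 1} : Set ℝ), dist s e ≤ δ ^ n →
      dist (γ s) (γ e) ≤ D * r ^ n)
    (hM : ∀ s ∈ Icc (0:ℝ) 1, ∀ t ∈ Icc (0:ℝ) 1, dist s t ≤ δ ^ n →
      dist (γ s) (γ t) ≤ 2 * D * r ^ n) :
    ∀ s ∈ Icc (0:ℝ) 1, ∀ t ∈ Icc (0:ℝ) 1, dist s t ≤ δ ^ (n + 1) →
      dist (γ s) (γ t) ≤ 2 * D * r ^ (n + 1) := by
  intro s hs t ht hst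
  wlog h : s ≤ t generalizing s t
  · rw [dist_comm] at hst ⊢
    exact this t ht s hs hst (le_of_not_ge h)
  have hm : 0 < m := pos_of_apply_ne x (by rw [hx0, hxm]; norm_num)
  obtain ⟨i, hi, hsi⟩ := exists_mem_Icc_succ x hm (by rw [hx0, hxm]; exact hs)
  let j : Fin m := ⟨i, hi⟩
  have hdist : ∀ u ∈ Icc s t, ∀ v ∈ Icc s t, dist u v ≤ δ ^ (n + 1) := fun u hu v hv =>
    (Real.dist_le_of_mem_Icc hu hv).trans (by rwa [Real.dist_eq, abs_sub_comm,
      abs_of_nonneg (sub_nonneg.2 h)] at hst)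
  by_cases hti : t ≤ x (i + 1)
  · have hI := image_zipT (i := j) (hε j) (by linarith [hδ j])
    obtain ⟨a, ha, rfl⟩ : s ∈ zipT x ε j '' Icc 0 1 := hI ▸ hsi
    obtain ⟨b, hb, rfl⟩ : t ∈ zipT x ε j '' Icc 0 1 := hI ▸ ⟨hsi.1.trans h, hti⟩
    calc _ ≤ r * (2 * D * r ^ n) := dist_apply_zipT_le (hε j) (hS j) (hγ j) hδ0 (hδ j) ha hb hst
          (hM a ha b hb)
      _ = 2 * D * r ^ (n + 1) := by ring
  · rw [not_le] at hti
    have hi1 : i + 1 < m := lt_of_le_of_ne hi fun h => by rw [h, hxm] at hti; linarith [ht.2]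
    let j' : Fin m := ⟨i + 1, hi1⟩
    have hδpow : δ ^ (n + 1) ≤ δ := pow_le_of_le_one hδ0.le hδ1.le n.succ_ne_zero
    have htj' : t ∈ Icc (x j') (x (j' + 1)) := by
      have := hδ j'
      have := hdist s ⟨le_rfl, h⟩ t ⟨h, le_rfl⟩
      rw [Real.dist_eq, abs_sub_comm, abs_of_nonneg (sub_nonneg.2 h)] at this
      exact ⟨hti.le, by simp only [j'] at *; linarith [hsi.2]⟩
    have hv : x (i + 1) ∈ Icc s t := ⟨hsi.2, hti.le⟩
    calc dist (γ s) (γ t) ≤ dist (γ s) (γ (x (i + 1))) + dist (γ t) (γ (x (i + 1))) :=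
          dist_triangle_right _ _ _
      _ ≤ D * r ^ (n + 1) + D * r ^ (n + 1) := add_le_add
          (dist_apply_vertex_le (hε j) (hS j) (hγ j) hδ0 (hδ j) hE hsi (Or.inr rfl)
            (hdist s ⟨le_rfl, h⟩ _ hv))
          (dist_apply_vertex_le (hε j') (hS j') (hγ j') hδ0 (hδ j') hE htj' (Or.inl rfl)
            (hdist t ⟨h, le_rfl⟩ _ hv))
      _ = 2 * D * r ^ (n + 1) := by ring

theorem IsZipper.exists_holderOnWith_of_selfSimilar (hzip : IsZipper S z ε)
    (hx : StrictMonoOn x (Iic m)) (hx0 : x 0 = 0) (hxm : x m = 1)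
    (hbdd : Bornology.IsBounded (γ '' Icc 0 1))
    (hγ : ∀ i, ∀ t ∈ Icc (0:ℝ) 1, S i (γ t) = γ (zipT x ε i t)) :
    ∃ C α : ℝ≥0, 0 < α ∧ HolderOnWith C α γ (Icc 0 1) := by
  obtain ⟨r, hr0, hr1, hS⟩ := exists_lipschitzWith_of_contractingWith hzip.2.2.1
  have hgap (i : Fin m) : 0 < x (i + 1) - x i :=
    sub_pos.2 (hx i.isLt.le (mem_Iic.2 i.isLt) (lt_add_one _))
  have hsmall : ∀ᶠ δ in 𝓝[>] (0:ℝ), δ < 1 ∧ ∀ i : Fin m, δ ≤ x (i + 1) - x i :=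
    nhdsWithin_le_nhds ((eventually_lt_nhds one_pos).and
      (eventually_all.2 fun i => eventually_le_nhds (hgap i)))
  obtain ⟨δ, ⟨hδ1, hδ⟩, hδ0⟩ := (hsmall.and self_mem_nhdsWithin).exists
  set D := Metric.diam (γ '' Icc 0 1)
  have hD : ∀ s ∈ Icc (0:ℝ) 1, ∀ t ∈ Icc (0:ℝ) 1, dist (γ s) (γ t) ≤ D := fun s hs t ht =>
    Metric.dist_le_diam_of_mem hbdd (mem_image_of_mem _ hs) (mem_image_of_mem _ ht)
  have hE (n : ℕ) : ∀ s ∈ Icc (0:ℝ) 1, ∀ e ∈ ({0, 1} : Set ℝ), dist s e ≤ δ ^ n →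
      dist (γ s) (γ e) ≤ D * r ^ n := by
    induction n with
    | zero =>
      intro s hs e he _
      have he' : e ∈ Icc (0:ℝ) 1 := by rcases he with rfl | rfl <;> simp
      simpa using hD s hs e he'
    | succ n ih => exact dist_apply_endpoint_le_succ hzip.1 hS hγ hδ0 hδ1 hδ hx0 hxm ih
  have hM (n : ℕ) : ∀ s ∈ Icc (0:ℝ) 1, ∀ t ∈ Icc (0:ℝ) 1, dist s t ≤ δ ^ n →
      dist (γ s) (γ t) ≤ 2 * D * r ^ n := by
    induction n with
    | zero =>
      intro s hs t ht _
      linarith [hD s hs t ht, Metric.diam_nonneg (s := γ '' Icc 0 1)]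
    | succ n ih => exact dist_apply_le_succ hzip.1 hS hγ hδ0 hδ1 hδ hx0 hxm (hE n) ih
  exact exists_holderOnWith_of_dist_le_pow hδ0 hδ1 hr0 hr1
    (fun s hs t ht => Real.dist_le_of_mem_Icc_01 hs ht) hM

end holder

theorem stmt4_general {X : Type*} [MetricSpace X] [CompleteSpace X] {m : ℕ}
    (S : Fin m → X → X) (z : ℕ → X) (ε : Fin m → ℕ) (hzip : IsZipper S z ε)
    (K : Set X) (hK : IsAttractor S K)
    (x : ℕ → ℝ) (hx0 : x 0 = 0) (hxm : x m = 1) (hmono : ∀ i < m, x i < x (i + 1)) :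
    ∃ γ : ℝ → X,
      (ContinuousOn γ (Icc 0 1) ∧ MapsTo γ (Icc 0 1) K ∧
        (∀ i ≤ m, γ (x i) = z i) ∧
        (∀ i : Fin m, ∀ t ∈ Icc (0:ℝ) 1, S i (γ t) = γ (zipT x ε i t))) ∧
      (∀ γ' : ℝ → X,
        (ContinuousOn γ' (Icc 0 1) ∧ MapsTo γ' (Icc 0 1) K ∧
          (∀ i ≤ m, γ' (x i) = z i) ∧
          (∀ i : Fin m, ∀ t ∈ Icc (0:ℝ) 1, S i (γ' t) = γ' (zipT x ε i t))) →
        EqOn γ γ' (Icc 0 1)) ∧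
      (∃ C r : NNReal, 0 < r ∧ HolderOnWith C r γ (Icc 0 1)) := by
  have hx : StrictMonoOn x (Iic m) := strictMonoOn_Iic_of_lt_succ fun i hi => by
    simpa using hmono i hi
  obtain ⟨γ, hγK, hγx, hγ⟩ := hzip.exists_selfSimilar hK hx hx0 hxm
  obtain ⟨C, α, hα, hC⟩ := hzip.exists_holderOnWith_of_selfSimilar hx hx0 hxm
    (hK.2.1.isBounded.subset (image_subset_iff.2 hγK)) hγ
  exact ⟨γ, ⟨hC.continuousOn hα, hγK, hγx, hγ⟩, fun γ' ⟨_, hγ'K, _, hγ'⟩ =>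
    hzip.eqOn_of_selfSimilar hK.2.1.isBounded hx.monotoneOn hx0 hxm hγK hγ hγ'K hγ', C, α, hα, hC⟩

/-- Existence, uniqueness and Hölder continuity of the linear parametrization
of a zipper. -/
theorem stmt4 {X : Type*} [MetricSpace X] [CompleteSpace X] {m : ℕ} (hm : 0 < m)
    (S : Fin m → X → X) (z : ℕ → X) (ε : Fin m → ℕ) (hzip : IsZipper S z ε)
    (K : Set X) (hK : IsAttractor S K)
    (x : ℕ → ℝ) (hx0 : x 0 = 0) (hxm : x m = 1) (hmono : ∀ i < m, x i < x (i + 1)) :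
    ∃ γ : ℝ → X,
      (ContinuousOn γ (Icc 0 1) ∧ MapsTo γ (Icc 0 1) K ∧
        (∀ i ≤ m, γ (x i) = z i) ∧
        (∀ i : Fin m, ∀ t ∈ Icc (0:ℝ) 1, S i (γ t) = γ (zipT x ε i t))) ∧
      (∀ γ' : ℝ → X,
        (ContinuousOn γ' (Icc 0 1) ∧ MapsTo γ' (Icc 0 1) K ∧
          (∀ i ≤ m, γ' (x i) = z i) ∧
          (∀ i : Fin m, ∀ t ∈ Icc (0:ℝ) 1, S i (γ' t) = γ' (zipT x ε i t))) →
        EqOn γ γ' (Icc 0 1)) ∧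
      (∃ C r : NNReal, 0 < r ∧ HolderOnWith C r γ (Icc 0 1)) :=
  stmt4_general S z ε hzip K hK x hx0 hxm hmono
end

section
/- The linear parametrization γ of a zipper is surjective onto the attractor K; in particular K is the continuous image of [0,1]. -/
open Set

/-- The linear parametrization of a zipper is surjective onto the attractor:
`K` is the continuous image of `[0,1]`. -/
theorem stmt5 {X : Type*} [MetricSpace X] [CompleteSpace X] {m : ℕ} (hm : 0 < m)
    (S : Fin m → X → X) (z : ℕ → X) (ε : Fin m → ℕ) (hzip : IsZipper S z ε)
    (K : Set X) (hK : IsAttractor S K)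
    (x : ℕ → ℝ) (hx0 : x 0 = 0) (hxm : x m = 1) (hmono : ∀ i < m, x i < x (i + 1))
    (γ : ℝ → X) (hγc : ContinuousOn γ (Icc 0 1)) (hγK : MapsTo γ (Icc 0 1) K)
    (hγv : ∀ i ≤ m, γ (x i) = z i)
    (hγs : ∀ i : Fin m, ∀ t ∈ Icc (0:ℝ) 1, S i (γ t) = γ (zipT x ε i t)) :
    γ '' Icc 0 1 = K := by
  obtain ⟨hε, hinj, hcon, hz0, hzm⟩ := hzip
  obtain ⟨hKne, hKcomp, hKinv⟩ := hK
  set A : Set X := γ '' Icc 0 1 with hA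
  have hAK : A ⊆ K := hγK.image_subset
  have hAcomp : IsCompact A := isCompact_Icc.image_of_continuousOn hγc
  have hxmono : ∀ i j : ℕ, i ≤ j → j ≤ m → x i ≤ x j := by
    intro i j hij hjm
    induction j with
    | zero => rw [Nat.le_zero.mp hij]
    | succ j ih =>
      rcases Nat.eq_or_lt_of_le hij with h | h
      · rw [h]
      · exact le_trans (ih (Nat.lt_succ_iff.mp h) (by omega))
          (le_of_lt (hmono j (by omega)))
  have hx01 : ∀ j ≤ m, x j ∈ Icc (0:ℝ) 1 := fun j hj =>
    ⟨hx0 ▸ hxmono 0 j (Nat.zero_le _) hj, hxm ▸ hxmono j m hj le_rfl⟩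
  have hT : ∀ i : Fin m, ∀ t ∈ Icc (0:ℝ) 1, zipT x ε i t ∈ Icc 0 1 := by
    intro i t ht
    have him := i.isLt
    have hεi := hε i
    have h1 := hx01 (i.val + ε i) (by omega)
    have h2 := hx01 (i.val + 1 - ε i) (by omega)
    obtain ⟨ht0, ht1⟩ := ht
    obtain ⟨h10, h11⟩ := h1
    obtain ⟨h20, h21⟩ := h2
    unfold zipT
    constructor
    · nlinarith
    · nlinarith
  have hAinv : ∀ i : Fin m, S i '' A ⊆ A := by
    rintro i _ ⟨_, ⟨t, ht, rfl⟩, rfl⟩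
    exact ⟨zipT x ε i t, hT i t ht, (hγs i t ht).symm⟩
  have ha0A : γ 0 ∈ A := ⟨0, ⟨le_refl 0, zero_le_one⟩, rfl⟩
  -- contraction ratios
  choose ri hri using hcon
  have : Nonempty (Fin m) := ⟨⟨0, hm⟩⟩
  set r : NNReal := Finset.univ.sup ri with hr
  have hrlt : r < 1 := by
    apply Finset.sup_lt_iff (by norm_num : (⊥ : NNReal) < 1) |>.mpr
    exact fun i _ => (hri i).1
  have hrltR : (r : ℝ) < 1 := by exact_mod_cast hrlt
  obtain ⟨C, hC⟩ := Metric.isBounded_iff.mp hKcomp.isBounded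
  have hC0 : 0 ≤ C := le_trans dist_nonneg (hC hKne.choose_spec hKne.choose_spec)
  have claim : ∀ n : ℕ, ∀ k ∈ K, ∃ a ∈ A, dist k a ≤ (r : ℝ) ^ n * C := by
    intro n
    induction n with
    | zero =>
      intro k hk
      exact ⟨γ 0, ha0A, by simpa using hC hk (hAK ha0A)⟩
    | succ n ih =>
      intro k hk
      rw [hKinv] at hk
      obtain ⟨i, k', hk'K, hke⟩ : ∃ i, ∃ k' ∈ K, S i k' = k := by
        simpa [Set.mem_iUnion] using hk
      subst hke
      obtain ⟨a, haA, hd⟩ := ih k' hk'K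
      refine ⟨S i a, hAinv i ⟨a, haA, rfl⟩, ?_⟩
      have hlip := (hri i).2.dist_le_mul k' a
      have hriler : (ri i : ℝ) ≤ (r : ℝ) :=
        NNReal.coe_le_coe.mpr (Finset.le_sup (Finset.mem_univ i))
      have hrn : (0:ℝ) ≤ (r : ℝ) ^ n * C :=
        mul_nonneg (pow_nonneg r.coe_nonneg n) hC0
      calc dist (S i k') (S i a) ≤ (ri i : ℝ) * dist k' a := hlip
        _ ≤ (r : ℝ) * ((r : ℝ) ^ n * C) :=
            mul_le_mul hriler hd dist_nonneg r.coe_nonneg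
        _ = (r : ℝ) ^ (n + 1) * C := by ring
  apply Subset.antisymm hAK
  intro k hk
  rw [← hAcomp.isClosed.closure_eq]
  rw [Metric.mem_closure_iff]
  intro δ hδ
  have htend : Filter.Tendsto (fun n : ℕ => (r : ℝ) ^ n * C) Filter.atTop (nhds 0) := by
    simpa using (tendsto_pow_atTop_nhds_zero_of_lt_one r.coe_nonneg hrltR).mul_const C
  obtain ⟨n, hn⟩ := (htend.eventually_lt_const hδ).exists
  obtain ⟨a, haA, hd⟩ := claim n k hk
  exact ⟨a, haA, lt_of_le_of_lt hd hn⟩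
end

section
/- The four planar similarities with vertices (0,0), (1/4, √3/4), (3/4, √3/4), (1,0) and signature (1,0,1) — i.e., the unique similarities of ratio 1/2 determined by the zipper conditions — form a zipper whose attractor is the Sierpinski gasket with vertices (0,0), (1,0), (1/2, √3/2). -/
open Set

/-- Vertices of the gasket zipper: `(0,0)`, `(1/4,√3/4)`, `(3/4,√3/4)`, `(1,0)`,
in the plane `ℝ² ≃ ℂ`. -/
noncomputable def gVert : ℕ → ℂ
  | 0 => 0
  | 1 => 1 / 4 + (Real.sqrt 3 / 4) * Complex.I
  | 2 => 3 / 4 + (Real.sqrt 3 / 4) * Complex.I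
  | _ => 1

/-- The three direct similarities of ratio `1/2` determined by the zipper
conditions with vertices `gVert` and signature `(1,0,1)`. -/
noncomputable def gZip : Fin 3 → ℂ → ℂ :=
  ![fun w => gVert 1 * (1 - w),
    fun w => w / 2 + gVert 1,
    fun w => (gVert 2 - 1) * w + 1]

/-- The three homotheties of ratio `1/2` centered at `(0,0)`, `(1,0)`,
`(1/2,√3/2)`, whose attractor is the Sierpinski gasket. -/
noncomputable def gasketMaps : Fin 3 → ℂ → ℂ :=
  ![fun w => w / 2,
    fun w => w / 2 + 1 / 2,
    fun w => w / 2 + (1 / 4 + (Real.sqrt 3 / 4) * Complex.I)]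

/-
Let `ω = (1 + i√3)/2` be the apex of the gasket, `H_v` the homothety of ratio `1/2` centred at
`v`, and `ρ w = ω (1 - w)` the rotation by `120°` permuting the vertices, `0 ↦ ω ↦ 1 ↦ 0`.
The zipper maps are gasket homotheties precomposed with symmetries:
`S₁ = H₀ ∘ ρ`, `S₂ = H_ω` and `S₃ = H₁ ∘ ρ²`. Since `ρ` conjugates the gasket system to itself,
`ρ` maps the gasket onto a compact invariant set of that system, hence onto the gasket itself by
uniqueness of attractors of contractions (the Hutchinson operator contracts the Hausdorff
distance). So the zipper maps send the gasket onto its three half-size copies.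
-/

open Metric NNReal Function

namespace LipschitzWith

variable {X Y : Type*} [PseudoEMetricSpace X] [PseudoEMetricSpace Y] {K : ℝ≥0} {f : X → Y}

theorem infEDist_image_le (hf : LipschitzWith K f) {t : Set X} (ht : t.Nonempty) (x : X) :
    infEDist (f x) (f '' t) ≤ K * infEDist x t := by
  have : Nonempty t := ht.to_subtype
  calc infEDist (f x) (f '' t) = ⨅ y : t, edist (f x) (f y) := by
        rw [infEDist, iInf_image, iInf_subtype']
    _ ≤ ⨅ y : t, K * edist x y := iInf_mono fun y => hf.edist_le_mul x y
    _ = K * infEDist x t := by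
        rw [infEDist, iInf_subtype', ENNReal.mul_iInf (by simp)]

theorem hausdorffEDist_image_le (hf : LipschitzWith K f) {s t : Set X} (hs : s.Nonempty)
    (ht : t.Nonempty) : hausdorffEDist (f '' s) (f '' t) ≤ K * hausdorffEDist s t := by
  refine hausdorffEDist_le_of_infEDist ?_ ?_ <;> rintro _ ⟨x, hx, rfl⟩
  · exact (hf.infEDist_image_le ht x).trans
      (by gcongr; exact infEDist_le_hausdorffEDist_of_mem hx)
  · rw [hausdorffEDist_comm]
    exact (hf.infEDist_image_le hs x).trans
      (by gcongr; exact infEDist_le_hausdorffEDist_of_mem hx)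

end LipschitzWith

namespace IsAttractor

variable {X : Type*} [MetricSpace X] {m : ℕ} {S : Fin m → X → X} {K : Set X}

theorem eq_of_lipschitzWith {r : ℝ≥0} (hr : r < 1) (hS : ∀ i, LipschitzWith r (S i))
    {L : Set X} (hK : IsAttractor S K) (hL : IsAttractor S L) : K = L := by
  obtain ⟨hKne, hKc, hKeq⟩ := hK
  obtain ⟨hLne, hLc, hLeq⟩ := hL
  set d := hausdorffEDist K L
  have hd : d ≠ ⊤ :=
    hausdorffEDist_ne_top_of_nonempty_of_bounded hKne hLne hKc.isBounded hLc.isBounded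
  have hcontract : d ≤ r * d := calc
    d = hausdorffEDist (⋃ i, S i '' K) (⋃ i, S i '' L) := by rw [← hKeq, ← hLeq]
    _ ≤ ⨆ i, hausdorffEDist (S i '' K) (S i '' L) := hausdorffEDist_iUnion_le
    _ ≤ r * d := iSup_le fun i => (hS i).hausdorffEDist_image_le hKne hLne
  have hd0 : d = 0 := by
    by_contra h0
    exact hcontract.not_gt <| by
      simpa using (ENNReal.mul_lt_mul_iff_left h0 hd).2 (ENNReal.coe_lt_one_iff.2 hr)
  exact (hKc.isClosed.hausdorffEDist_zero_iff hLc.isClosed).1 hd0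

theorem image_of_semiconj (hK : IsAttractor S K) {g : X → X} (hg : Continuous g)
    {σ : Fin m → Fin m} (hσ : σ.Surjective) (hgS : ∀ i, Semiconj g (S i) (S (σ i))) :
    IsAttractor S (g '' K) := by
  refine ⟨hK.1.image g, hK.2.1.image hg, ?_⟩
  calc g '' K = g '' ⋃ i, S i '' K := congrArg _ hK.2.2
    _ = ⋃ i, S (σ i) '' (g '' K) := by simp only [image_iUnion, (hgS _).set_image _]
    _ = ⋃ i, S i '' (g '' K) := hσ.iUnion_comp fun i => S i '' (g '' K)

theorem of_eq_comp {T : Fin m → X → X} (hT : IsAttractor T K) {σ : Fin m → Fin m}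
    (hσ : σ.Surjective) {g : Fin m → X → X} (hg : ∀ i, g i '' K = K)
    (hS : ∀ i, S i = T (σ i) ∘ g i) : IsAttractor S K := by
  refine ⟨hT.1, hT.2.1, ?_⟩
  calc K = ⋃ i, T i '' K := hT.2.2
    _ = ⋃ i, T (σ i) '' K := (hσ.iUnion_comp fun i => T i '' K).symm
    _ = ⋃ i, S i '' K := by simp only [hS, image_comp, hg]

end IsAttractor

theorem dist_of_forall_eq_mul_add {𝕜 : Type*} [NormedDivisionRing 𝕜] {f : 𝕜 → 𝕜} {a b : 𝕜}
    (hf : ∀ w, f w = a * w + b) (p q : 𝕜) : dist (f p) (f q) = ‖a‖ * dist p q := by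
  rw [hf, hf, dist_add_right, ← smul_eq_mul, ← smul_eq_mul, dist_smul₀]

noncomputable def gasketApex : ℂ := 1 / 2 + (Real.sqrt 3 / 2) * Complex.I

theorem gasketApex_sq : gasketApex ^ 2 = gasketApex - 1 := by
  have h3 : ((Real.sqrt 3 : ℝ) : ℂ) ^ 2 = 3 := by
    rw [← Complex.ofReal_pow, Real.sq_sqrt (by norm_num)]; norm_num
  unfold gasketApex
  linear_combination (Complex.I ^ 2 / 4) * h3 + (3 / 4) * Complex.I_sq

theorem norm_gasketApex : ‖gasketApex‖ = 1 := by
  have h : gasketApex ^ 3 = -1 := by linear_combination (gasketApex + 1) * gasketApex_sq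
  have := congrArg norm h
  rw [norm_pow, norm_neg, norm_one] at this
  exact (pow_eq_one_iff_of_nonneg (norm_nonneg _) (by norm_num)).1 this

theorem gVert_one : gVert 1 = gasketApex / 2 := by
  simp only [gVert, gasketApex]; ring

theorem gVert_two : gVert 2 = (1 + gasketApex) / 2 := by
  simp only [gVert, gasketApex]; ring

noncomputable def gasketVertex : Fin 3 → ℂ := ![0, 1, gasketApex]

theorem gasketMaps_apply (i : Fin 3) (w : ℂ) : gasketMaps i w = (w + gasketVertex i) / 2 := by
  fin_cases i <;>
    simp only [gasketMaps, gasketVertex, gasketApex, Fin.reduceFinMk, Matrix.cons_val] <;> ring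

theorem lipschitzWith_gasketMaps (i : Fin 3) : LipschitzWith (1 / 2) (gasketMaps i) :=
  LipschitzWith.of_dist_le_mul fun p q => by
    rw [dist_of_forall_eq_mul_add (a := 1 / 2) (b := gasketVertex i / 2)
      (fun w => by rw [gasketMaps_apply]; ring)]
    norm_num

theorem exists_gZip_eq_mul_add (i : Fin 3) :
    ∃ a b : ℂ, ‖a‖ = 1 / 2 ∧ ∀ w, gZip i w = a * w + b := by
  fin_cases i
  · refine ⟨-(gasketApex / 2), gasketApex / 2, by simp [norm_gasketApex], fun w => ?_⟩
    change gVert 1 * (1 - w) = _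
    rw [gVert_one]; ring
  · refine ⟨1 / 2, gasketApex / 2, by norm_num, fun w => ?_⟩
    change w / 2 + gVert 1 = _
    rw [gVert_one]; ring
  · refine ⟨gasketApex ^ 2 / 2, 1, by simp [norm_gasketApex], fun w => ?_⟩
    change (gVert 2 - 1) * w + 1 = _
    rw [gVert_two, gasketApex_sq]; ring

theorem dist_gZip (i : Fin 3) (p q : ℂ) : dist (gZip i p) (gZip i q) = dist p q / 2 := by
  obtain ⟨a, b, ha, hf⟩ := exists_gZip_eq_mul_add i
  rw [dist_of_forall_eq_mul_add hf, ha]; ring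

theorem isZipper_gZip : IsZipper gZip gVert ![1, 0, 1] := by
  refine ⟨by decide, fun j => ?_, fun j => ⟨1 / 2, by norm_num, ?_⟩, fun j => ?_, fun j => ?_⟩
  · exact fun p q h => dist_eq_zero.1 (by simpa [h] using (dist_gZip j p q).symm)
  · exact LipschitzWith.of_dist_le_mul fun p q => by rw [dist_gZip]; push_cast; linarith
  all_goals
    fin_cases j <;>
      simp only [gZip, gVert, Fin.reduceFinMk, Matrix.cons_val, Nat.reduceAdd,
        Nat.add_one_sub_one, tsub_zero, tsub_self] <;>
      ring

noncomputable def gasketRot (w : ℂ) : ℂ := gasketApex * (1 - w)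

theorem gasketRot_midpoint (v w : ℂ) :
    gasketRot ((v + w) / 2) = (gasketRot v + gasketRot w) / 2 := by
  unfold gasketRot; ring

theorem gasketRot_gasketVertex (i : Fin 3) :
    gasketRot (gasketVertex i) = gasketVertex (![2, 0, 1] i) := by
  fin_cases i <;>
    simp only [gasketRot, gasketVertex, Fin.reduceFinMk, Matrix.cons_val, sub_zero, sub_self,
      mul_one, mul_zero]
  linear_combination -gasketApex_sq

theorem semiconj_gasketRot (i : Fin 3) :
    Semiconj gasketRot (gasketMaps i) (gasketMaps (![2, 0, 1] i)) := fun w => by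
  rw [gasketMaps_apply, gasketMaps_apply, gasketRot_midpoint, gasketRot_gasketVertex]

theorem image_gasketRot {K : Set ℂ} (hK : IsAttractor gasketMaps K) : gasketRot '' K = K :=
  (hK.image_of_semiconj (by unfold gasketRot; fun_prop) (by decide) semiconj_gasketRot
    |>.eq_of_lipschitzWith (by norm_num) lipschitzWith_gasketMaps hK)

theorem gZip_eq_comp (i : Fin 3) :
    gZip i = gasketMaps (![0, 2, 1] i) ∘ ![gasketRot, id, gasketRot ∘ gasketRot] i := by
  funext w
  fin_cases i <;>
    simp only [gZip, gasketMaps_apply, gasketVertex, gasketRot, gVert_one, gVert_two,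
      Fin.reduceFinMk, Matrix.cons_val, comp_apply, id_eq]
  · ring
  · ring
  · linear_combination (1 - w) / 2 * gasketApex_sq

/-- The maps `gZip` are similarities of ratio `1/2` forming a zipper with
vertices `(0,0),(1/4,√3/4),(3/4,√3/4),(1,0)` and signature `(1,0,1)`, whose
attractor is the Sierpinski gasket with vertices `(0,0),(1,0),(1/2,√3/2)`. -/
theorem stmt6 (K : Set ℂ) (hgasket : IsAttractor gasketMaps K) :
    (∀ i, ∀ p q : ℂ, dist (gZip i p) (gZip i q) = dist p q / 2) ∧
    IsZipper gZip gVert ![1, 0, 1] ∧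
    IsAttractor gZip K := by
  refine ⟨dist_gZip, isZipper_gZip, hgasket.of_eq_comp (by decide) (fun i => ?_) gZip_eq_comp⟩
  have hrot := image_gasketRot hgasket
  fin_cases i <;> simp [image_comp, hrot]
end
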